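/- Let p ∈ ℂ[z₁,z₂] have bidegree (n,m) and no zeros in 𝔻², and suppose there exist polynomial vector maps A₁ : ℂ² → ℂᴺ, A₂ : ℂ² → ℂᴹ with |p(z)|² − |p̃(z)|² = (1−|z₁|²)‖A₁(z)‖² + (1−|z₂|²)‖A₂(z)‖² for all z ∈ ℂ². Then for every z ∈ 𝕋²: ‖A₁(z)‖² = n|p(z)|² − 2 Re( conj(p(z)) · z₁ ∂₁p(z) ) and ‖A₂(z)‖² = m|p(z)|² − 2 Re( conj(p(z)) · z₂ ∂₂p(z) ). -/

import Mathlib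

/-!
Fix `z` on the torus and a coordinate `k`, and move only `z k` radially, `v r = update z k (r * z k)`.
The reflection of `v r` evaluates `p` at `update z k (r⁻¹ * z k)`, and every term of the Agler
identity except the `k`-th vanishes because the other coordinates stay on the circle, so
`|p(v r)|² − r^(2 dₖ) |p(v r⁻¹)|² = (1 − r²) ‖Aₖ(v r)‖²` for `r > 0`.
Both sides vanish at `r = 1`; the right side is `(r − 1)` times a continuous function, so
comparing derivatives at `r = 1` gives `−2 ‖Aₖ(z)‖² = 2 dₖ |p(z)|² − 4 Re(conj p(z) · zₖ ∂ₖp(z))`.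
-/

open MvPolynomial Filter Topology Function ComplexConjugate

theorem hasDerivAt_sub_mul_of_continuousAt {𝕜 : Type*} [NontriviallyNormedField 𝕜]
    {g : 𝕜 → 𝕜} {a : 𝕜} (hg : ContinuousAt g a) :
    HasDerivAt (fun x => (x - a) * g x) (g a) a := by
  rw [hasDerivAt_iff_tendsto_slope]
  refine (hg.tendsto.mono_left nhdsWithin_le_nhds).congr' ?_
  filter_upwards [self_mem_nhdsWithin] with x hx
  rw [slope_def_field, sub_self, zero_mul, sub_zero,
    mul_div_cancel_left₀ _ (sub_ne_zero.2 hx)]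

namespace MvPolynomial

theorem continuous_of_forall_exists_eval {σ ι R : Type*} [CommSemiring R] [TopologicalSpace R]
    [IsTopologicalSemiring R] {A : (σ → R) → ι → R}
    (hA : ∀ i, ∃ q : MvPolynomial σ R, ∀ z, A z i = eval z q) : Continuous A :=
  continuous_pi fun i => by
    obtain ⟨q, hq⟩ := hA i
    exact (continuous_eval q).congr fun z => (hq z).symm

variable {σ 𝕜 : Type*} [NontriviallyNormedField 𝕜] [DecidableEq σ]

theorem hasDerivAt_eval_update (q : MvPolynomial σ 𝕜) (z : σ → 𝕜) (i : σ) (w : 𝕜) :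
    HasDerivAt (fun u => eval (update z i u) q) (eval (update z i w) (pderiv i q)) w := by
  induction q using MvPolynomial.induction_on with
  | C a => simpa [pderiv_C] using hasDerivAt_const w a
  | add q r hq hr => simpa only [map_add] using hq.fun_add hr
  | mul_X q j hq =>
    simp only [eval_X, Derivation.leibniz, pderiv_X, smul_eq_mul, map_add, map_mul]
    rcases eq_or_ne j i with rfl | hj
    · simpa [add_comm, mul_comm] using hq.fun_mul (hasDerivAt_id w)
    · simpa [update_of_ne hj, Pi.single_apply, hj, mul_comm] using hq.mul_const (z j)

theorem hasDerivAt_eval_update_mul (q : MvPolynomial σ 𝕜) (z : σ → 𝕜) (i : σ) :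
    HasDerivAt (fun u => eval (update z i (u * z i)) q) (z i * eval z (pderiv i q)) 1 := by
  have h := (hasDerivAt_eval_update q z i (1 * z i)).comp (1 : 𝕜)
    ((hasDerivAt_id (1 : 𝕜)).mul_const (z i))
  simp only [one_mul, update_eq_self] at h
  exact h.congr_deriv (mul_comm _ _)

theorem hasDerivAt_eval_update_inv_mul (q : MvPolynomial σ 𝕜) (z : σ → 𝕜) (i : σ) :
    HasDerivAt (fun u => eval (update z i (u⁻¹ * z i)) q) (-(z i * eval z (pderiv i q))) 1 := by
  have h := (hasDerivAt_eval_update_mul q z i).comp_of_eq (1 : 𝕜) (hasDerivAt_inv one_ne_zero)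
    inv_one.symm
  simp only [one_pow] at h
  exact h.congr_deriv (by ring)

end MvPolynomial

section AglerIdentity

variable {σ : Type*} [DecidableEq σ]

theorem hasDerivAt_radial_defect (p : MvPolynomial σ ℂ) (z : σ → ℂ) (k : σ) (d : ℕ) :
    HasDerivAt (fun r : ℝ => ‖eval (update z k (r * z k)) p‖ ^ 2
        - r ^ (2 * d) * ‖eval (update z k ((r : ℂ)⁻¹ * z k)) p‖ ^ 2)
      (4 * (conj (eval z p) * (z k * eval z (pderiv k p))).re - 2 * d * ‖eval z p‖ ^ 2) 1 := by
  have hout := (hasDerivAt_eval_update_mul p z k).comp_ofReal (z := 1)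
  have hin := (hasDerivAt_eval_update_inv_mul p z k).comp_ofReal (z := 1)
  refine (hout.norm_sq.fun_sub ((hasDerivAt_pow (2 * d) 1).fun_mul hin.norm_sq)).congr_deriv ?_
  simp only [Complex.ofReal_one, one_mul, inv_one, update_eq_self, Complex.inner, one_pow]
  rw [neg_mul, Complex.neg_re, mul_comm (conj _)]
  push_cast
  ring

theorem eq_of_radial_defect_eq_one_sub_sq_mul (p : MvPolynomial σ ℂ) (z : σ → ℂ) (k : σ) (d : ℕ)
    {S : ℝ → ℝ} (hS : ContinuousAt S 1)
    (h : ∀ r : ℝ, 0 < r → ‖eval (update z k (r * z k)) p‖ ^ 2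
        - r ^ (2 * d) * ‖eval (update z k ((r : ℂ)⁻¹ * z k)) p‖ ^ 2 = (1 - r ^ 2) * S r) :
    S 1 = d * ‖eval z p‖ ^ 2 - 2 * (conj (eval z p) * (z k * eval z (pderiv k p))).re := by
  have hfactor : HasDerivAt (fun r => (r - 1) * (-(1 + r) * S r)) (-(1 + 1) * S 1) 1 :=
    hasDerivAt_sub_mul_of_continuousAt ((continuousAt_const.add continuousAt_id).neg.mul hS)
  have heq := (hasDerivAt_radial_defect p z k d).unique <| hfactor.congr_of_eventuallyEq <| by
    filter_upwards [eventually_gt_nhds one_pos] with r hr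
    rw [h r hr]
    ring
  linarith

theorem norm_update_ofReal_mul {z : σ → ℂ} (hz : ∀ i, ‖z i‖ = 1) (k : σ) {r : ℝ} (hr : 0 ≤ r)
    (i : σ) : ‖update z k (r * z k) i‖ = if i = k then r else 1 := by
  rw [update_apply]
  split_ifs <;> simp [hz, abs_of_nonneg hr]

theorem conj_inv_update_ofReal_mul {z : σ → ℂ} (hz : ∀ i, ‖z i‖ = 1) (k : σ) (r : ℝ) :
    (fun i => (conj (update z k (r * z k) i))⁻¹) = update z k ((r : ℂ)⁻¹ * z k) := by
  have hz' : ∀ i, (conj (z i))⁻¹ = z i := fun i => by rw [← Complex.inv_eq_conj (hz i), inv_inv]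
  funext i
  rw [update_apply, update_apply]
  split_ifs
  · rw [map_mul, Complex.conj_ofReal, mul_inv, hz']
  · exact hz' i

variable [Fintype σ]

theorem radial_defect_eq_of_agler_identity {p pt : MvPolynomial σ ℂ} {d : σ → ℕ}
    (hpt : ∀ v : σ → ℂ, (∀ i, v i ≠ 0) →
      eval v pt = (∏ i, v i ^ d i) * conj (eval (fun i => (conj (v i))⁻¹) p))
    {T : σ → (σ → ℂ) → ℝ}
    (hAgler : ∀ v, ‖eval v p‖ ^ 2 - ‖eval v pt‖ ^ 2 = ∑ k, (1 - ‖v k‖ ^ 2) * T k v)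
    {z : σ → ℂ} (hz : ∀ i, ‖z i‖ = 1) (k : σ) {r : ℝ} (hr : 0 < r) :
    ‖eval (update z k (r * z k)) p‖ ^ 2
        - r ^ (2 * d k) * ‖eval (update z k ((r : ℂ)⁻¹ * z k)) p‖ ^ 2
      = (1 - r ^ 2) * T k (update z k (r * z k)) := by
  have hnorm := norm_update_ofReal_mul hz k hr.le
  have hne : ∀ i, update z k (r * z k) i ≠ 0 := fun i =>
    norm_ne_zero_iff.1 (by rw [hnorm]; split_ifs <;> positivity)
  have hpt_norm : ‖eval (update z k (r * z k)) pt‖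
      = r ^ d k * ‖eval (update z k ((r : ℂ)⁻¹ * z k)) p‖ := by
    rw [hpt _ hne, conj_inv_update_ofReal_mul hz, norm_mul, norm_prod, RCLike.norm_conj]
    simp only [norm_pow, hnorm, ite_pow, one_pow, Finset.prod_ite_eq', Finset.mem_univ, if_true]
  have hsum : ∑ j, (1 - ‖update z k (r * z k) j‖ ^ 2) * T j (update z k (r * z k))
      = (1 - r ^ 2) * T k (update z k (r * z k)) := by
    rw [Finset.sum_eq_single k (fun j _ hj => by simp [hj, hz]) (by simp), hnorm, if_pos rfl]
  rw [← hsum, ← hAgler, hpt_norm]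
  ring

theorem agler_sum_eq_on_torus {p pt : MvPolynomial σ ℂ} {d : σ → ℕ}
    (hpt : ∀ v : σ → ℂ, (∀ i, v i ≠ 0) →
      eval v pt = (∏ i, v i ^ d i) * conj (eval (fun i => (conj (v i))⁻¹) p))
    {T : σ → (σ → ℂ) → ℝ} (hT : ∀ k, Continuous (T k))
    (hAgler : ∀ v, ‖eval v p‖ ^ 2 - ‖eval v pt‖ ^ 2 = ∑ k, (1 - ‖v k‖ ^ 2) * T k v)
    {z : σ → ℂ} (hz : ∀ i, ‖z i‖ = 1) (k : σ) :
    T k z = d k * ‖eval z p‖ ^ 2 - 2 * (conj (eval z p) * (z k * eval z (pderiv k p))).re := by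
  have hS : ContinuousAt (fun r : ℝ => T k (update z k (r * z k))) 1 :=
    ((hT k).comp (continuous_const.update k
      (Complex.continuous_ofReal.mul continuous_const))).continuousAt
  simpa using eq_of_radial_defect_eq_one_sub_sq_mul p z k (d k) hS fun r hr =>
    radial_defect_eq_of_agler_identity hpt hAgler hz k hr

end AglerIdentity

theorem stmt15 (n m N M : ℕ) (p pt : MvPolynomial (Fin 2) ℂ)
    (hpt : ∀ z : Fin 2 → ℂ, (∀ i, z i ≠ 0) →
      eval z pt = (z 0 ^ n * z 1 ^ m) *
        (starRingEnd ℂ) (eval (fun i => ((starRingEnd ℂ) (z i))⁻¹) p))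
    (A₁ : (Fin 2 → ℂ) → Fin N → ℂ) (A₂ : (Fin 2 → ℂ) → Fin M → ℂ)
    (hA₁ : ∀ i, ∃ q : MvPolynomial (Fin 2) ℂ, ∀ z, A₁ z i = eval z q)
    (hA₂ : ∀ i, ∃ q : MvPolynomial (Fin 2) ℂ, ∀ z, A₂ z i = eval z q)
    (hAgler : ∀ z : Fin 2 → ℂ,
      ‖eval z p‖ ^ 2 - ‖eval z pt‖ ^ 2 =
        (1 - ‖z 0‖ ^ 2) * ∑ i, ‖A₁ z i‖ ^ 2 + (1 - ‖z 1‖ ^ 2) * ∑ i, ‖A₂ z i‖ ^ 2) :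
    ∀ z : Fin 2 → ℂ, ‖z 0‖ = 1 → ‖z 1‖ = 1 →
      (∑ i, ‖A₁ z i‖ ^ 2 = n * ‖eval z p‖ ^ 2 -
          2 * ((starRingEnd ℂ) (eval z p) * (z 0 * eval z (pderiv 0 p))).re) ∧
      (∑ i, ‖A₂ z i‖ ^ 2 = m * ‖eval z p‖ ^ 2 -
          2 * ((starRingEnd ℂ) (eval z p) * (z 1 * eval z (pderiv 1 p))).re) := by
  intro z hz0 hz1
  have hcont : ∀ {L : ℕ} {A : (Fin 2 → ℂ) → Fin L → ℂ},
      (∀ i, ∃ q : MvPolynomial (Fin 2) ℂ, ∀ z, A z i = eval z q) →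
      Continuous fun z => ∑ i, ‖A z i‖ ^ 2 := fun hA =>
    continuous_finsetSum _ fun i _ =>
      ((continuous_apply i).comp (continuous_of_forall_exists_eval hA)).norm.pow 2
  have key := agler_sum_eq_on_torus (d := ![n, m])
    (T := ![fun v => ∑ i, ‖A₁ v i‖ ^ 2, fun v => ∑ i, ‖A₂ v i‖ ^ 2])
    (by simpa [Fin.prod_univ_two] using hpt)
    (Fin.forall_fin_two.2 ⟨hcont hA₁, hcont hA₂⟩)
    (by simpa [Fin.sum_univ_two] using hAgler)
    (Fin.forall_fin_two.2 ⟨hz0, hz1⟩)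
  exact ⟨by simpa using key 0, by simpa using key 1⟩
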